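/- arXiv:0711.3060 — 4 statements merged into one kernel-verified Lean document; each statement's English description precedes it below -/
import Mathlib

section
/- Starting from any n ∈ {0,1,…,ℓ−2}, the sequence defined by n₁ = n and n_{i+1} = the unique element m > n_i with m' = n_i (where m = m₀ + ℓm₁, 0 ≤ m₀ ≤ ℓ−2, m₁ ≥ 1, and m' = (ℓ−2−m₀)+ℓ(m₁−1)) is strictly increasing, and the set {n_i : i ≥ 1} equals the intersection of the W_ℓ-dot-orbit of n with ℕ. -/
/-- `y` is in the orbit of `x` under the dot-action of the affine Weyl group
`W_ℓ = ℤ/2 ⋉ ℤ` on `ℤ`, given by `(1,m)·x = x + 2mℓ` and `(−1,m)·x = −x − 2 + 2mℓ`. -/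
def dotOrbit (ℓ x y : ℤ) : Prop :=
  (∃ m : ℤ, y = x + 2 * m * ℓ) ∨ (∃ m : ℤ, y = -x - 2 + 2 * m * ℓ)

/-!
Write `x = r + ℓq` with `0 ≤ r ≤ ℓ - 2`. Then `x` determines `m` with `m' = x` uniquely:
`m = (ℓ - 2 - r) + ℓ(q + 1) = -x - 2 + 2ℓ(q + 1)`, which is the dot-action of the
reflection `(-1, q + 1)` on `x`. Iterating from `n` therefore alternates between
`n + 2kℓ` and `-n - 2 + 2(k + 1)ℓ`, and these are exactly the nonnegative points of the
dot-orbit of `n`, since `n + 2mℓ < 0` for `m < 0` and `-n - 2 + 2mℓ < 0` for `m ≤ 0`.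
-/

def dotSucc (ℓ x : ℤ) : ℤ := -x - 2 + 2 * (x / ℓ + 1) * ℓ

section

variable {ℓ : ℤ}

lemma add_mul_eq_dotSucc {x m₀ m₁ : ℤ} (h₀ : 0 ≤ m₀) (h₁ : m₀ ≤ ℓ - 2)
    (hx : x = (ℓ - 2 - m₀) + ℓ * (m₁ - 1)) : m₀ + ℓ * m₁ = dotSucc ℓ x := by
  have hq : x / ℓ = m₁ - 1 :=
    ((Int.ediv_emod_unique (by omega)).2 ⟨hx.symm, by omega, by omega⟩).1
  rw [dotSucc, hq, hx]
  ring

lemma dotSucc_add_two_mul {n : ℤ} (h₀ : 0 ≤ n) (h₁ : n < ℓ) (k : ℤ) :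
    dotSucc ℓ (n + 2 * k * ℓ) = -n - 2 + 2 * (k + 1) * ℓ := by
  have hq : (n + 2 * k * ℓ) / ℓ = 2 * k :=
    ((Int.ediv_emod_unique (by omega)).2 ⟨by ring, h₀, h₁⟩).1
  rw [dotSucc, hq]
  ring

lemma dotSucc_neg_sub_two_add_two_mul {n : ℤ} (h₀ : 0 ≤ n) (h₁ : n ≤ ℓ - 2) (k : ℤ) :
    dotSucc ℓ (-n - 2 + 2 * (k + 1) * ℓ) = n + 2 * (k + 1) * ℓ := by
  have hq : (-n - 2 + 2 * (k + 1) * ℓ) / ℓ = 2 * k + 1 :=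
    ((Int.ediv_emod_unique (r := ℓ - 2 - n) (by omega)).2 ⟨by ring, by omega, by omega⟩).1
  rw [dotSucc, hq]
  ring

lemma iterate_dotSucc {n : ℤ} (h₀ : 0 ≤ n) (h₁ : n ≤ ℓ - 2) {ns : ℕ → ℤ} (hstart : ns 0 = n)
    (hnext : ∀ i, ns (i + 1) = dotSucc ℓ (ns i)) (k : ℕ) :
    ns (2 * k) = n + 2 * k * ℓ ∧ ns (2 * k + 1) = -n - 2 + 2 * (k + 1) * ℓ := by
  have hodd : ∀ k : ℕ, ns (2 * k) = n + 2 * k * ℓ →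
      ns (2 * k + 1) = -n - 2 + 2 * (k + 1) * ℓ := fun k hk => by
    rw [hnext, hk, dotSucc_add_two_mul h₀ (by omega)]
  induction k with
  | zero => exact ⟨by simpa using hstart, hodd 0 (by simpa using hstart)⟩
  | succ k ih =>
    have heven : ns (2 * (k + 1)) = n + 2 * ↑(k + 1) * ℓ := by
      rw [show 2 * (k + 1) = 2 * k + 1 + 1 by ring, hnext, ih.2,
        dotSucc_neg_sub_two_add_two_mul h₀ h₁]
      push_cast
      ring
    exact ⟨heven, hodd (k + 1) heven⟩

lemma nonneg_and_dotOrbit_iff {n : ℤ} (h₀ : 0 ≤ n) (h₁ : n ≤ ℓ - 2) (z : ℤ) :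
    0 ≤ z ∧ dotOrbit ℓ n z ↔
      ∃ k : ℕ, z = n + 2 * k * ℓ ∨ z = -n - 2 + 2 * (k + 1) * ℓ := by
  constructor
  · rintro ⟨hz, ⟨m, rfl⟩ | ⟨m, rfl⟩⟩
    · have hm : 0 ≤ m := by
        by_contra! hm
        nlinarith
      exact ⟨m.toNat, Or.inl (by rw [Int.toNat_of_nonneg hm])⟩
    · have hm : 1 ≤ m := by
        by_contra! hm
        nlinarith
      exact ⟨(m - 1).toNat, Or.inr (by rw [Int.toNat_of_nonneg (by omega)]; ring)⟩
  · rintro ⟨k, rfl | rfl⟩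
    · exact ⟨by nlinarith [Int.natCast_nonneg k], Or.inl ⟨k, rfl⟩⟩
    · exact ⟨by nlinarith [Int.natCast_nonneg k], Or.inr ⟨k + 1, rfl⟩⟩

end

theorem stmt8_general (ℓ : ℤ)
    (n : ℤ) (hn0 : 0 ≤ n) (hn1 : n ≤ ℓ - 2)
    (ns : ℕ → ℤ) (hstart : ns 0 = n)
    (hsucc : ∀ i : ℕ, ns i < ns (i + 1) ∧
      ∃ m₀ m₁ : ℤ, 0 ≤ m₀ ∧ m₀ ≤ ℓ - 2 ∧ 1 ≤ m₁ ∧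
        ns (i + 1) = m₀ + ℓ * m₁ ∧ ns i = (ℓ - 2 - m₀) + ℓ * (m₁ - 1)) :
    StrictMono ns ∧ Set.range ns = {z : ℤ | 0 ≤ z ∧ dotOrbit ℓ n z} := by
  have hnext : ∀ i, ns (i + 1) = dotSucc ℓ (ns i) := fun i => by
    obtain ⟨-, m₀, m₁, h₀, h₁, -, hy, hx⟩ := hsucc i
    rw [hy, add_mul_eq_dotSucc h₀ h₁ hx]
  have hns := iterate_dotSucc hn0 hn1 hstart hnext
  refine ⟨strictMono_nat_of_lt_succ fun i => (hsucc i).1, ?_⟩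
  ext z
  rw [Set.mem_ofPred_eq, nonneg_and_dotOrbit_iff hn0 hn1]
  constructor
  · rintro ⟨i, rfl⟩
    obtain ⟨k, rfl | rfl⟩ := Nat.even_or_odd' i
    exacts [⟨k, Or.inl (hns k).1⟩, ⟨k, Or.inr (hns k).2⟩]
  · rintro ⟨k, rfl | rfl⟩
    exacts [⟨2 * k, (hns k).1⟩, ⟨2 * k + 1, (hns k).2⟩]

/-- Starting from `n ∈ {0,…,ℓ−2}`, the sequence with `n₁ = n` and
`n_{i+1}` the element `m > n_i` with `m' = n_i` (where `m = m₀ + ℓm₁`,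
`0 ≤ m₀ ≤ ℓ−2`, `m₁ ≥ 1`, and `m' = (ℓ−2−m₀) + ℓ(m₁−1)`) is strictly
increasing, and its set of values is exactly the intersection of the
`W_ℓ`-dot-orbit of `n` with `ℕ` (the nonnegative integers). -/
theorem stmt8 (ℓ : ℤ) (hodd : Odd ℓ) (hℓ : 2 < ℓ)
    (n : ℤ) (hn0 : 0 ≤ n) (hn1 : n ≤ ℓ - 2)
    (ns : ℕ → ℤ) (hstart : ns 0 = n)
    (hsucc : ∀ i : ℕ, ns i < ns (i + 1) ∧
      ∃ m₀ m₁ : ℤ, 0 ≤ m₀ ∧ m₀ ≤ ℓ - 2 ∧ 1 ≤ m₁ ∧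
        ns (i + 1) = m₀ + ℓ * m₁ ∧ ns i = (ℓ - 2 - m₀) + ℓ * (m₁ - 1)) :
    StrictMono ns ∧ Set.range ns = {z : ℤ | 0 ≤ z ∧ dotOrbit ℓ n z} :=
  stmt8_general ℓ n hn0 hn1 ns hstart hsucc
end

section
/- Let A be an abelian category with enough structure and V an object with a filtration 0 = V⁰ ⊆ V¹ ⊆ ⋯ ⊆ Vᵐ = V such that Vⁱ/Vⁱ⁻¹ ≅ Xᵢ, and suppose for each i there are objects Tᵢ with monomorphisms Xᵢ ↪ Tᵢ such that Ext¹(V/Vⁱ, Tᵢ) = 0 for all i. Then there is a monomorphism V ↪ ⊕ᵢ Tᵢ. -/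
/-!
Each composite `F (i+1) ↠ X i ↪ T i` extends to a map `gᵢ : V → T i`: pushing the extension
`0 → F (i+1) → V → V / F (i+1) → 0` out along it gives an extension of `V / F (i+1)` by `T i`,
which splits by hypothesis, and a retraction onto `T i` restricts to the required map on `V`.
If every `gᵢ` kills `v`, then `v ∈ F (i+1)` forces `v ∈ F i` since `X i ↪ T i` is injective,
so descending the filtration from `F m = V` to `F 0 = 0` gives `v = 0`.
-/

open Function LinearMap

namespace Submodule

variable {R : Type*} {V T : Type} [Ring R] [AddCommGroup V] [Module R V]
  [AddCommGroup T] [Module R T] (W : Submodule R V) (f : W →ₗ[R] T)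

def pushoutRel : Submodule R (T × V) := range (f.prod (-W.subtype))

abbrev Pushout : Type := (T × V) ⧸ W.pushoutRel f

def pushoutInl : T →ₗ[R] W.Pushout f := (W.pushoutRel f).mkQ ∘ₗ LinearMap.inl R T V

def pushoutInr : V →ₗ[R] W.Pushout f := (W.pushoutRel f).mkQ ∘ₗ LinearMap.inr R T V

lemma pushoutRel_le_ker : W.pushoutRel f ≤ ker (W.mkQ ∘ₗ LinearMap.snd R T V) := by
  rintro _ ⟨w, rfl⟩
  simp

def pushoutToQuotient : W.Pushout f →ₗ[R] V ⧸ W :=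
  (W.pushoutRel f).liftQ _ (W.pushoutRel_le_ker f)

lemma pushoutInr_coe (w : W) : W.pushoutInr f w = W.pushoutInl f (f w) := by
  refine (Quotient.eq _).mpr ⟨-w, ?_⟩
  simp

lemma pushoutInl_injective : Injective (W.pushoutInl f) := by
  refine (injective_iff_map_eq_zero _).mpr fun t ht => ?_
  obtain ⟨w, hw⟩ := (Quotient.mk_eq_zero _).mp ht
  obtain rfl : w = 0 := by simpa [Prod.ext_iff] using congrArg Prod.snd hw
  simpa using (congrArg Prod.fst hw).symm

lemma pushoutToQuotient_surjective : Surjective (W.pushoutToQuotient f) := fun q => by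
  obtain ⟨v, rfl⟩ := W.mkQ_surjective q
  exact ⟨W.pushoutInr f v, rfl⟩

lemma exact_pushoutInl_pushoutToQuotient :
    Exact (W.pushoutInl f) (W.pushoutToQuotient f) := by
  refine exact_of_comp_of_mem_range (by ext; simp [pushoutInl, pushoutToQuotient]) ?_
  intro q hq
  obtain ⟨⟨t, v⟩, rfl⟩ := (W.pushoutRel f).mkQ_surjective q
  have hv : v ∈ W := by simpa [pushoutToQuotient] using hq
  refine ⟨t + f ⟨v, hv⟩, (Quotient.eq _).mpr ⟨⟨v, hv⟩, ?_⟩⟩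
  simp

theorem exists_extension_of_splits
    (hsplit : ∀ (E : Type) [AddCommGroup E] [Module R E]
      (φ : T →ₗ[R] E) (ψ : E →ₗ[R] V ⧸ W),
      Injective φ → Surjective ψ → range φ = ker ψ →
      ∃ s : (V ⧸ W) →ₗ[R] E, ψ ∘ₗ s = LinearMap.id) :
    ∃ g : V →ₗ[R] T, ∀ w : W, g w = f w := by
  have hexact := W.exact_pushoutInl_pushoutToQuotient f
  have hsplit' := hexact.split_tfae (W.pushoutInl_injective f) (W.pushoutToQuotient_surjective f)
  obtain ⟨r, hr⟩ := (hsplit'.out 0 1).mp <| hsplit _ _ _ (W.pushoutInl_injective f)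
    (W.pushoutToQuotient_surjective f) (exact_iff.mp hexact).symm
  refine ⟨r ∘ₗ W.pushoutInr f, fun w => ?_⟩
  rw [LinearMap.comp_apply, pushoutInr_coe, ← LinearMap.comp_apply, hr, id_apply]

end Submodule

theorem injective_pi_of_filtration {R V : Type*} [Ring R] [AddCommGroup V] [Module R V]
    {m : ℕ} {F : ℕ → Submodule R V} (hbot : F 0 = ⊥) (htop : F m = ⊤)
    {T : Fin m → Type*} [∀ i, AddCommGroup (T i)] [∀ i, Module R (T i)]
    (g : ∀ i, V →ₗ[R] T i) (hg : ∀ (i : Fin m) v, v ∈ F (i + 1) → g i v = 0 → v ∈ F i) :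
    Injective (LinearMap.pi g) := by
  refine (injective_iff_map_eq_zero _).mpr fun v hv => ?_
  have hgv (i : Fin m) : g i v = 0 := congrFun hv i
  suffices ∀ k ≤ m, v ∈ F k → v = 0 from this m le_rfl (htop ▸ Submodule.mem_top)
  intro k
  induction k with
  | zero => simp [hbot]
  | succ k ih => exact fun hk hvk => ih (by omega) (hg ⟨k, hk⟩ v hvk (hgv _))

theorem stmt12_general {R : Type} [Ring R] {V : Type} [AddCommGroup V] [Module R V]
    (m : ℕ) (F : ℕ → Submodule R V)
    (hbot : F 0 = ⊥) (htop : F m = ⊤)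
    (X T : Fin m → Type)
    [∀ i, AddCommGroup (X i)] [∀ i, Module R (X i)]
    [∀ i, AddCommGroup (T i)] [∀ i, Module R (T i)]
    (e : ∀ i : Fin m,
      ((F ((i : ℕ) + 1)) ⧸ (Submodule.comap (F ((i : ℕ) + 1)).subtype (F (i : ℕ))))
        ≃ₗ[R] X i)
    (ι : ∀ i : Fin m, X i →ₗ[R] T i) (hι : ∀ i, Function.Injective (ι i))
    (hext : ∀ i : Fin m, ∀ (E : Type) [AddCommGroup E] [Module R E]
      (φ : T i →ₗ[R] E) (ψ : E →ₗ[R] V ⧸ F ((i : ℕ) + 1)),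
      Function.Injective φ → Function.Surjective ψ →
      LinearMap.range φ = LinearMap.ker ψ →
      ∃ s : (V ⧸ F ((i : ℕ) + 1)) →ₗ[R] E, ψ ∘ₗ s = LinearMap.id) :
    ∃ g : V →ₗ[R] (∀ i : Fin m, T i), Function.Injective g := by
  choose g hg using fun i : Fin m => (F (i + 1)).exists_extension_of_splits
    (ι i ∘ₗ (e i).toLinearMap ∘ₗ ((F i).comap (F (i + 1)).subtype).mkQ) (hext i)
  refine ⟨LinearMap.pi g, injective_pi_of_filtration hbot htop g fun i v hv hgv => ?_⟩
  have hker : ι i (e i (Submodule.Quotient.mk ⟨v, hv⟩)) = 0 := (hg i ⟨v, hv⟩).symm.trans hgv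
  have hinj : Injective (ι i ∘ₗ (e i).toLinearMap) := (hι i).comp (e i).injective
  simpa using (injective_iff_map_eq_zero _).mp hinj _ hker

/-- Let `V` be a module with a filtration `0 = F 0 ⊆ F 1 ⊆ ⋯ ⊆ F m = V` whose
subquotients `F (i+1) / F i` are isomorphic to `X i`, and suppose for each `i`
there are modules `T i` with monomorphisms `X i ↪ T i` such that
`Ext¹(V / F (i+1), T i) = 0` (expressed by: every short exact sequence
`0 → T i → E → V / F (i+1) → 0` splits). Then there is a monomorphism
`V ↪ ⊕ᵢ T i`. -/
theorem stmt12 {R : Type} [Ring R] {V : Type} [AddCommGroup V] [Module R V]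
    (m : ℕ) (F : ℕ → Submodule R V)
    (hmono : Monotone F) (hbot : F 0 = ⊥) (htop : F m = ⊤)
    (X T : Fin m → Type)
    [∀ i, AddCommGroup (X i)] [∀ i, Module R (X i)]
    [∀ i, AddCommGroup (T i)] [∀ i, Module R (T i)]
    (e : ∀ i : Fin m,
      ((F ((i : ℕ) + 1)) ⧸ (Submodule.comap (F ((i : ℕ) + 1)).subtype (F (i : ℕ))))
        ≃ₗ[R] X i)
    (ι : ∀ i : Fin m, X i →ₗ[R] T i) (hι : ∀ i, Function.Injective (ι i))
    (hext : ∀ i : Fin m, ∀ (E : Type) [AddCommGroup E] [Module R E]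
      (φ : T i →ₗ[R] E) (ψ : E →ₗ[R] V ⧸ F ((i : ℕ) + 1)),
      Function.Injective φ → Function.Surjective ψ →
      LinearMap.range φ = LinearMap.ker ψ →
      ∃ s : (V ⧸ F ((i : ℕ) + 1)) →ₗ[R] E, ψ ∘ₗ s = LinearMap.id) :
    ∃ g : V →ₗ[R] (∀ i : Fin m, T i), Function.Injective g :=
  stmt12_general m F hbot htop X T e ι hι hext
end

section
/- With V_n* as above and q such that the balanced q-integers [1]_q,…,[n]_q are all nonzero, the subspace Y = {x ∈ V_n* ⊗ V_n* : ρ₁(E)x = ρ₂(S⁻¹E)x, ρ₁(F)x = ρ₂(S⁻¹F)x, ρ₁(K)x = ρ₂(S⁻¹K)x} is exactly one-dimensional, spanned by y = Σ_{i=0}^{n} (−1)^i q^{i(n−i+1)} [n choose i]_q e_i ⊗ e_{n−i}. -/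
/-! In the coordinates `c a b` of `x` in the basis `e_a ⊗ e_b`, the `K`-condition reads
`q^(n-2a) c a b = q^(2b-n) c a b`; as `q^(2m) ≠ 1` for `0 < |m| ≤ n`, it confines `x` to the
antidiagonal `b = n - a`. Writing `w a := c a (n - a)`, the `E`-condition becomes the recursion
`[a+1] w (a+1) = -q^(n-2a) [n-a] w a`, which determines `x` from `w 0` because `[a+1] ≠ 0`.
Conversely, the `E`- and `F`-conditions for `y` both reduce to this recursion for its
coefficients, i.e. to the identity `[i+1] [n choose i+1]_q = [n-i] [n choose i]_q`, which is
proved for the Gaussian polynomials by Pascal's recursion. -/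

open TensorProduct

/-- The balanced quantum integer `[m]_q = (q^m − q^{−m})/(q − q^{−1})
= q^{1−m}(1 + q² + ⋯ + q^{2(m−1)})`. -/
noncomputable def qint {k : Type} [Field k] (q : k) (m : ℕ) : k :=
  q ^ (1 - (m : ℤ)) * ∑ t ∈ Finset.range m, q ^ (2 * t)

/-- The (unbalanced) Gaussian binomial polynomial, via the Pascal recursion. -/
noncomputable def gaussPoly : ℕ → ℕ → Polynomial ℤ
  | _, 0 => 1
  | 0, _ + 1 => 0
  | n + 1, i + 1 => gaussPoly n i + Polynomial.X ^ (i + 1) * gaussPoly n (i + 1)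

/-- The balanced `q`-binomial coefficient `[n choose i]_q`. -/
noncomputable def qbinom {k : Type} [Field k] (q : k) (n i : ℕ) : k :=
  q ^ (-(i * (n - i) : ℤ)) * Polynomial.eval₂ (Int.castRingHom k) (q ^ 2) (gaussPoly n i)

/-- The action of `E` on `V_n*`: `E·e_i = [i]_q e_{i−1}`. -/
noncomputable def Eop {k : Type} [Field k] (q : k) (n : ℕ) :
    (Fin (n + 1) → k) →ₗ[k] (Fin (n + 1) → k) :=
  Matrix.toLin' (Matrix.of fun a b : Fin (n + 1) =>
    if (a : ℕ) + 1 = (b : ℕ) then qint q b else 0)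

/-- The action of `F` on `V_n*`: `F·e_i = [n−i]_q e_{i+1}`. -/
noncomputable def Fop {k : Type} [Field k] (q : k) (n : ℕ) :
    (Fin (n + 1) → k) →ₗ[k] (Fin (n + 1) → k) :=
  Matrix.toLin' (Matrix.of fun a b : Fin (n + 1) =>
    if (a : ℕ) = (b : ℕ) + 1 then qint q (n - b) else 0)

/-- The action of `K` on `V_n*`: `K·e_i = q^{n−2i} e_i`. -/
noncomputable def Kop {k : Type} [Field k] (q : k) (n : ℕ) :
    (Fin (n + 1) → k) →ₗ[k] (Fin (n + 1) → k) :=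
  Matrix.toLin' (Matrix.of fun a b : Fin (n + 1) =>
    if a = b then q ^ ((n : ℤ) - 2 * (a : ℕ)) else 0)

/-- The action of `K⁻¹` on `V_n*`: `K⁻¹·e_i = q^{2i−n} e_i`. -/
noncomputable def Kinvop {k : Type} [Field k] (q : k) (n : ℕ) :
    (Fin (n + 1) → k) →ₗ[k] (Fin (n + 1) → k) :=
  Matrix.toLin' (Matrix.of fun a b : Fin (n + 1) =>
    if a = b then q ^ (2 * ((a : ℕ) : ℤ) - (n : ℤ)) else 0)

/-- The canonical element `y = Σᵢ (−1)^i q^{i(n−i+1)} [n choose i]_q eᵢ ⊗ e_{n−i}`. -/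
noncomputable def yElt {k : Type} [Field k] (q : k) (n : ℕ) :
    (Fin (n + 1) → k) ⊗[k] (Fin (n + 1) → k) :=
  ∑ i : Fin (n + 1),
    ((-1 : k) ^ (i : ℕ) * q ^ ((i : ℕ) * (n - (i : ℕ) + 1)) * qbinom q n i) •
      (Pi.single i (1 : k) ⊗ₜ[k] Pi.single i.rev (1 : k))

open Polynomial Finset

noncomputable def qNat (m : ℕ) : ℤ[X] := ∑ t ∈ range m, X ^ t

theorem qNat_add (a b : ℕ) : qNat (a + b) = qNat a + X ^ a * qNat b := by
  simp only [qNat, sum_range_add, mul_sum, pow_add]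

theorem gaussPoly_zero_right (n : ℕ) : gaussPoly n 0 = 1 := by
  cases n <;> rfl

theorem gaussPoly_succ_succ (n i : ℕ) :
    gaussPoly (n + 1) (i + 1) = gaussPoly n i + X ^ (i + 1) * gaussPoly n (i + 1) := rfl

theorem gaussPoly_eq_zero_of_lt : ∀ {n i : ℕ}, n < i → gaussPoly n i = 0
  | 0, _ + 1, _ => rfl
  | n + 1, i + 1, h => by
    rw [gaussPoly_succ_succ, gaussPoly_eq_zero_of_lt (by omega : n < i),
      gaussPoly_eq_zero_of_lt (by omega : n < i + 1), mul_zero, add_zero]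

-- With truncated subtraction this holds for every `i`: for `i ≥ n` both sides vanish.
theorem qNat_succ_mul_gaussPoly_succ :
    ∀ n i : ℕ, qNat (i + 1) * gaussPoly n (i + 1) = qNat (n - i) * gaussPoly n i
  | 0, i => by simp [gaussPoly_eq_zero_of_lt, qNat]
  | n + 1, 0 => by
    have ih := qNat_succ_mul_gaussPoly_succ n 0
    have h₁ : qNat 1 = 1 := by simp [qNat]
    have h₂ : qNat (n + 1) = 1 + X * qNat n := by rw [add_comm, qNat_add, h₁, pow_one]
    rw [gaussPoly_succ_succ]
    simp only [zero_add, Nat.sub_zero, gaussPoly_zero_right, h₁, h₂] at ih ⊢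
    linear_combination X * ih
  | n + 1, j + 1 => by
    rcases lt_or_ge j n with hj | hj
    · have ih₁ := qNat_succ_mul_gaussPoly_succ n (j + 1)
      have ih₂ := qNat_succ_mul_gaussPoly_succ n j
      have h₁ := qNat_add (j + 2) (n - (j + 1))
      have h₂ := qNat_add (j + 1) (n - j)
      rw [show j + 2 + (n - (j + 1)) = n + 1 by omega] at h₁
      rw [show j + 1 + (n - j) = n + 1 by omega] at h₂
      rw [gaussPoly_succ_succ, gaussPoly_succ_succ, Nat.add_sub_add_right]
      linear_combination X ^ (j + 2) * ih₁ + ih₂ + gaussPoly n (j + 1) * (h₂ - h₁)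
    · rw [gaussPoly_eq_zero_of_lt (by omega : n + 1 < j + 2), Nat.sub_eq_zero_of_le (by omega)]
      simp [qNat]

section QuantumNumbers

variable {k : Type} [Field k] (q : k)

theorem eval₂_qNat (m : ℕ) :
    (qNat m).eval₂ (Int.castRingHom k) (q ^ 2) = ∑ t ∈ range m, q ^ (2 * t) := by
  simp [qNat, eval₂_finsetSum, pow_mul]

theorem qint_succ_mul_qbinom_succ (hq : q ≠ 0) {n i : ℕ} (hi : i < n) :
    qint q (i + 1) * qbinom q n (i + 1) = qint q (n - i) * qbinom q n i := by
  have key := congrArg (eval₂ (Int.castRingHom k) (q ^ 2)) (qNat_succ_mul_gaussPoly_succ n i)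
  simp only [eval₂_mul, eval₂_qNat] at key
  rw [qint, qint, qbinom, qbinom, mul_mul_mul_comm, ← zpow_add₀ hq, mul_mul_mul_comm,
    ← zpow_add₀ hq, key]
  congr 2
  push_cast [Nat.cast_sub hi.le]
  ring

noncomputable def yCoeff (q : k) (n m : ℕ) : k :=
  (-1) ^ m * q ^ (m * (n - m + 1)) * qbinom q n m

theorem yCoeff_zero (n : ℕ) : yCoeff q n 0 = 1 := by
  simp [yCoeff, qbinom, gaussPoly_zero_right]

theorem qint_succ_mul_yCoeff_succ (hq : q ≠ 0) {n m : ℕ} (hm : m < n) :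
    qint q (m + 1) * yCoeff q n (m + 1) =
      -(q ^ ((n : ℤ) - 2 * m) * qint q (n - m) * yCoeff q n m) := by
  have hpow : q ^ ((m + 1) * (n - (m + 1) + 1)) =
      q ^ ((n : ℤ) - 2 * m) * q ^ (m * (n - m + 1)) := by
    rw [← zpow_natCast, ← zpow_natCast, ← zpow_add₀ hq]
    congr 1
    push_cast [Nat.cast_sub hm.le, Nat.cast_sub hm]
    ring
  simp only [yCoeff, hpow]
  linear_combination (-(-1) ^ m * q ^ ((n : ℤ) - 2 * m) * q ^ (m * (n - m + 1))) *
    qint_succ_mul_qbinom_succ q hq hm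

end QuantumNumbers

section TensorCoord

open Matrix

variable {R ι ι' κ κ' : Type*} [CommRing R] [Fintype ι] [Fintype κ]

theorem Matrix.mul_transpose_apply {l m o : Type*} [Fintype m] (C : Matrix l m R)
    (M : Matrix o m R) (a : l) (b : o) : (C * Mᵀ) a b = (M * Cᵀ) b a := by
  simp [Matrix.mul_apply, mul_comm]

noncomputable def tensorCoord : (ι → R) ⊗[R] (κ → R) ≃ₗ[R] Matrix ι κ R :=
  ((Pi.basisFun R ι).tensorProduct (Pi.basisFun R κ)).equivFun ≪≫ₗ
    LinearEquiv.curry R R ι κ ≪≫ₗ Matrix.ofLinearEquiv R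

theorem tensorCoord_tmul (u : ι → R) (v : κ → R) : tensorCoord (u ⊗ₜ v) = vecMulVec u v := by
  ext a b
  simp [tensorCoord, vecMulVec_apply, mul_comm]

theorem tensorCoord_rTensor [DecidableEq ι] [Fintype ι'] (f : (ι → R) →ₗ[R] ι' → R)
    (x : (ι → R) ⊗[R] (κ → R)) :
    tensorCoord (f.rTensor (κ → R) x) = LinearMap.toMatrix' f * tensorCoord x := by
  induction x with
  | zero => simp
  | tmul u v => simp [tensorCoord_tmul, mul_vecMulVec]
  | add x y hx hy => simp [hx, hy, Matrix.mul_add]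

theorem tensorCoord_lTensor [DecidableEq κ] [Fintype κ'] (f : (κ → R) →ₗ[R] κ' → R)
    (x : (ι → R) ⊗[R] (κ → R)) :
    tensorCoord (f.lTensor (ι → R) x) = tensorCoord x * (LinearMap.toMatrix' f)ᵀ := by
  induction x with
  | zero => simp
  | tmul u v => simp [tensorCoord_tmul, vecMulVec_mul, vecMul_transpose]
  | add x y hx hy => simp [hx, hy, Matrix.add_mul]

end TensorCoord

section Operators

open Matrix

variable {k : Type} [Field k] (q : k) {n : ℕ} {α : Type*}

theorem toMatrix'_Eop_mul_apply_castSucc (C : Matrix (Fin (n + 1)) α k) (i : Fin n) (b : α) :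
    (LinearMap.toMatrix' (Eop q n) * C) i.castSucc b = qint q (i + 1) * C i.succ b := by
  rw [Eop, LinearMap.toMatrix'_toLin', mul_apply, sum_eq_single i.succ]
  · simp
  · intro j _ hj
    rw [of_apply, if_neg (fun h => hj (Fin.ext (by simp [← h]))), zero_mul]
  · simp

theorem toMatrix'_Eop_mul_apply_last (C : Matrix (Fin (n + 1)) α k) (b : α) :
    (LinearMap.toMatrix' (Eop q n) * C) (Fin.last n) b = 0 := by
  rw [Eop, LinearMap.toMatrix'_toLin', mul_apply]
  refine sum_eq_zero fun j _ => ?_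
  rw [of_apply, if_neg (by simp; omega), zero_mul]

theorem toMatrix'_Fop_mul_apply_succ (C : Matrix (Fin (n + 1)) α k) (i : Fin n) (b : α) :
    (LinearMap.toMatrix' (Fop q n) * C) i.succ b = qint q (n - i) * C i.castSucc b := by
  rw [Fop, LinearMap.toMatrix'_toLin', mul_apply, sum_eq_single i.castSucc]
  · simp
  · intro j _ hj
    rw [of_apply, if_neg (fun h => hj (Fin.ext (by simp at h ⊢; omega))), zero_mul]
  · simp

theorem toMatrix'_Fop_mul_apply_zero (C : Matrix (Fin (n + 1)) α k) (b : α) :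
    (LinearMap.toMatrix' (Fop q n) * C) 0 b = 0 := by
  rw [Fop, LinearMap.toMatrix'_toLin', mul_apply]
  refine sum_eq_zero fun j _ => ?_
  rw [of_apply, if_neg (by simp), zero_mul]

theorem toMatrix'_Kop :
    LinearMap.toMatrix' (Kop q n) = diagonal fun a : Fin (n + 1) => q ^ ((n : ℤ) - 2 * (a : ℕ)) :=
  LinearMap.toMatrix'_toLin' _

theorem toMatrix'_Kinvop :
    LinearMap.toMatrix' (Kinvop q n) =
      diagonal fun a : Fin (n + 1) => q ^ (2 * ((a : ℕ) : ℤ) - n) :=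
  LinearMap.toMatrix'_toLin' _

end Operators

section Coordinates

open Matrix

variable {k : Type} [Field k] (q : k) {n : ℕ} (x : (Fin (n + 1) → k) ⊗[k] (Fin (n + 1) → k))

theorem tensorCoord_rTensor_Eop_castSucc (i : Fin n) (b : Fin (n + 1)) :
    tensorCoord ((Eop q n).rTensor _ x) i.castSucc b = qint q i.succ * tensorCoord x i.succ b := by
  rw [tensorCoord_rTensor, toMatrix'_Eop_mul_apply_castSucc, Fin.val_succ]

theorem tensorCoord_rTensor_Eop_last (b : Fin (n + 1)) :
    tensorCoord ((Eop q n).rTensor _ x) (Fin.last n) b = 0 := by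
  rw [tensorCoord_rTensor, toMatrix'_Eop_mul_apply_last]

theorem tensorCoord_lTensor_EKinv_castSucc (a : Fin (n + 1)) (j : Fin n) :
    tensorCoord ((-(Eop q n ∘ₗ Kinvop q n)).lTensor _ x) a j.castSucc =
      -(q ^ (2 * ((j.succ : ℕ) : ℤ) - n) * qint q j.succ * tensorCoord x a j.succ) := by
  rw [tensorCoord_lTensor, Matrix.mul_transpose_apply, map_neg, LinearMap.toMatrix'_comp,
    toMatrix'_Kinvop, Matrix.neg_mul, Matrix.mul_assoc, neg_apply, toMatrix'_Eop_mul_apply_castSucc, diagonal_mul,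
    transpose_apply, Fin.val_succ]
  ring

theorem tensorCoord_lTensor_EKinv_last (a : Fin (n + 1)) :
    tensorCoord ((-(Eop q n ∘ₗ Kinvop q n)).lTensor _ x) a (Fin.last n) = 0 := by
  rw [tensorCoord_lTensor, Matrix.mul_transpose_apply, map_neg, LinearMap.toMatrix'_comp,
    Matrix.neg_mul, Matrix.mul_assoc, neg_apply, toMatrix'_Eop_mul_apply_last, neg_zero]

theorem tensorCoord_rTensor_Fop_succ (i : Fin n) (b : Fin (n + 1)) :
    tensorCoord ((Fop q n).rTensor _ x) i.succ b =
      qint q (n - i.castSucc) * tensorCoord x i.castSucc b := by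
  rw [tensorCoord_rTensor, toMatrix'_Fop_mul_apply_succ, Fin.val_castSucc]

theorem tensorCoord_rTensor_Fop_zero (b : Fin (n + 1)) :
    tensorCoord ((Fop q n).rTensor _ x) 0 b = 0 := by
  rw [tensorCoord_rTensor, toMatrix'_Fop_mul_apply_zero]

theorem tensorCoord_lTensor_KF_succ (a : Fin (n + 1)) (j : Fin n) :
    tensorCoord ((-(Kop q n ∘ₗ Fop q n)).lTensor _ x) a j.succ =
      -(q ^ ((n : ℤ) - 2 * (j.succ : ℕ)) * qint q (n - j.castSucc) *
        tensorCoord x a j.castSucc) := by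
  rw [tensorCoord_lTensor, Matrix.mul_transpose_apply, map_neg, LinearMap.toMatrix'_comp,
    toMatrix'_Kop, Matrix.neg_mul, Matrix.mul_assoc, neg_apply, diagonal_mul, toMatrix'_Fop_mul_apply_succ,
    transpose_apply, Fin.val_castSucc]
  ring

theorem tensorCoord_lTensor_KF_zero (a : Fin (n + 1)) :
    tensorCoord ((-(Kop q n ∘ₗ Fop q n)).lTensor _ x) a 0 = 0 := by
  rw [tensorCoord_lTensor, Matrix.mul_transpose_apply, map_neg, LinearMap.toMatrix'_comp,
    toMatrix'_Kop, Matrix.neg_mul, Matrix.mul_assoc, neg_apply, diagonal_mul,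
    toMatrix'_Fop_mul_apply_zero, mul_zero, neg_zero]

theorem tensorCoord_rTensor_Kop (a b : Fin (n + 1)) :
    tensorCoord ((Kop q n).rTensor _ x) a b = q ^ ((n : ℤ) - 2 * (a : ℕ)) * tensorCoord x a b := by
  rw [tensorCoord_rTensor, toMatrix'_Kop, diagonal_mul]

theorem tensorCoord_lTensor_Kinvop (a b : Fin (n + 1)) :
    tensorCoord ((Kinvop q n).lTensor _ x) a b =
      q ^ (2 * ((b : ℕ) : ℤ) - n) * tensorCoord x a b := by
  rw [tensorCoord_lTensor, toMatrix'_Kinvop, diagonal_transpose, mul_diagonal, mul_comm]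

end Coordinates

section CanonicalElement

variable {k : Type} [Field k] (q : k) (n : ℕ)

theorem tensorCoord_yElt (a b : Fin (n + 1)) :
    tensorCoord (yElt q n) a b = if b = a.rev then yCoeff q n a else 0 := by
  rw [yElt, map_sum, Matrix.sum_apply, Finset.sum_eq_single a
    (fun i _ hi => by simp [tensorCoord_tmul, Matrix.vecMulVec_apply, hi.symm]) (by simp)]
  simp [tensorCoord_tmul, Matrix.vecMulVec_apply, Pi.single_apply, yCoeff]

theorem yElt_ne_zero : yElt q n ≠ 0 := by
  intro h
  have := tensorCoord_yElt q n 0 (Fin.last n)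
  simp [h, yCoeff_zero] at this

theorem rTensor_Kop_yElt :
    (Kop q n).rTensor _ (yElt q n) = (Kinvop q n).lTensor _ (yElt q n) := by
  refine tensorCoord.injective (Matrix.ext fun a b => ?_)
  rw [tensorCoord_rTensor_Kop, tensorCoord_lTensor_Kinvop, tensorCoord_yElt]
  split_ifs with h
  · subst h
    congr 2
    simp only [Fin.val_rev]
    omega
  · simp

theorem rTensor_Eop_yElt (hq : q ≠ 0) :
    (Eop q n).rTensor _ (yElt q n) = (-(Eop q n ∘ₗ Kinvop q n)).lTensor _ (yElt q n) := by
  refine tensorCoord.injective (Matrix.ext fun a b => ?_)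
  rcases Fin.eq_castSucc_or_eq_last a with ⟨i, rfl⟩ | rfl <;>
    rcases Fin.eq_castSucc_or_eq_last b with ⟨j, rfl⟩ | rfl
  · rw [tensorCoord_rTensor_Eop_castSucc, tensorCoord_lTensor_EKinv_castSucc, tensorCoord_yElt,
      tensorCoord_yElt, Fin.rev_succ, Fin.rev_castSucc]
    simp only [Fin.castSucc_inj, Fin.succ_inj]
    split_ifs with h
    · subst h
      have hrev : (i.rev.succ : ℕ) = n - i := by simp only [Fin.val_succ, Fin.val_rev]; omega
      rw [hrev, Fin.val_succ, Fin.val_castSucc, qint_succ_mul_yCoeff_succ q hq i.isLt,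
        show 2 * ((n - i : ℕ) : ℤ) - n = n - 2 * i by omega]
    · simp
  · rw [tensorCoord_rTensor_Eop_castSucc, tensorCoord_lTensor_EKinv_last, tensorCoord_yElt,
      Fin.rev_succ, if_neg (Fin.castSucc_ne_last _).symm, mul_zero]
  · rw [tensorCoord_rTensor_Eop_last, tensorCoord_lTensor_EKinv_castSucc, tensorCoord_yElt,
      Fin.rev_last, if_neg (Fin.succ_ne_zero _), mul_zero, neg_zero]
  · rw [tensorCoord_rTensor_Eop_last, tensorCoord_lTensor_EKinv_last]

theorem rTensor_Fop_yElt (hq : q ≠ 0) :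
    (Fop q n).rTensor _ (yElt q n) = (-(Kop q n ∘ₗ Fop q n)).lTensor _ (yElt q n) := by
  refine tensorCoord.injective (Matrix.ext fun a b => ?_)
  rcases Fin.eq_zero_or_eq_succ a with rfl | ⟨i, rfl⟩ <;>
    rcases Fin.eq_zero_or_eq_succ b with rfl | ⟨j, rfl⟩
  · rw [tensorCoord_rTensor_Fop_zero, tensorCoord_lTensor_KF_zero]
  · rw [tensorCoord_rTensor_Fop_zero, tensorCoord_lTensor_KF_succ, tensorCoord_yElt,
      Fin.rev_zero, if_neg (Fin.castSucc_ne_last _), mul_zero, neg_zero]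
  · rw [tensorCoord_rTensor_Fop_succ, tensorCoord_lTensor_KF_zero, tensorCoord_yElt,
      Fin.rev_castSucc, if_neg (Fin.succ_ne_zero _).symm, mul_zero]
  · rw [tensorCoord_rTensor_Fop_succ, tensorCoord_lTensor_KF_succ, tensorCoord_yElt,
      tensorCoord_yElt, Fin.rev_succ, Fin.rev_castSucc]
    simp only [Fin.castSucc_inj, Fin.succ_inj]
    split_ifs with h
    · subst h
      have hrev : (i.rev.succ : ℕ) = n - i := by simp only [Fin.val_succ, Fin.val_rev]; omega
      have hrev' : n - (i.rev.castSucc : ℕ) = i + 1 := by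
        simp only [Fin.val_castSucc, Fin.val_rev]; omega
      have hz : q ^ (2 * (i : ℤ) - n) * q ^ ((n : ℤ) - 2 * i) = 1 := by
        rw [← zpow_add₀ hq, sub_add_sub_cancel', sub_self, zpow_zero]
      rw [hrev, hrev', Fin.val_succ, Fin.val_castSucc,
        show (n : ℤ) - 2 * ((n - i : ℕ) : ℤ) = 2 * i - n by omega]
      linear_combination q ^ (2 * (i : ℤ) - n) * qint_succ_mul_yCoeff_succ q hq i.isLt -
        qint q (n - i) * yCoeff q n i * hz
    · simp

end CanonicalElement

section Uniqueness

variable {k : Type} [Field k] {q : k} {n : ℕ} {x : (Fin (n + 1) → k) ⊗[k] (Fin (n + 1) → k)}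

theorem zpow_two_mul_ne_one (hroot : ∀ m : ℕ, 1 ≤ m → m ≤ n → q ^ (2 * m) ≠ 1) {d : ℤ}
    (hd₀ : d ≠ 0) (hd : d.natAbs ≤ n) : q ^ (2 * d) ≠ 1 := by
  have hm := hroot d.natAbs (Int.natAbs_pos.2 hd₀) hd
  rcases Int.natAbs_eq d with h | h <;> rw [h]
  · exact_mod_cast hm
  · rwa [mul_neg, zpow_neg, inv_ne_one, ← Nat.cast_ofNat, ← Nat.cast_mul, zpow_natCast]

theorem tensorCoord_eq_zero_of_ne_rev (hq : q ≠ 0)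
    (hroot : ∀ m : ℕ, 1 ≤ m → m ≤ n → q ^ (2 * m) ≠ 1)
    (hK : (Kop q n).rTensor _ x = (Kinvop q n).lTensor _ x) {a b : Fin (n + 1)} (hab : b ≠ a.rev) :
    tensorCoord x a b = 0 := by
  have h := congrFun (congrFun (congrArg tensorCoord hK) a) b
  rw [tensorCoord_rTensor_Kop, tensorCoord_lTensor_Kinvop] at h
  by_contra hx
  have hab' : (b : ℕ) ≠ n - a := fun h' => hab (Fin.ext (by rw [Fin.val_rev]; omega))
  refine zpow_two_mul_ne_one hroot (d := n - a - b) (by omega) (by omega) ?_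
  rw [show 2 * ((n : ℤ) - a - b) = ((n : ℤ) - 2 * (a : ℕ)) - (2 * ((b : ℕ) : ℤ) - n) by ring,
    zpow_sub₀ hq, mul_right_cancel₀ hx h, div_self (zpow_ne_zero _ hq)]

theorem qint_mul_tensorCoord_succ_rev
    (hE : (Eop q n).rTensor _ x = (-(Eop q n ∘ₗ Kinvop q n)).lTensor _ x) (i : Fin n) :
    qint q (i + 1) * tensorCoord x i.succ i.succ.rev =
      -(q ^ ((n : ℤ) - 2 * i) * qint q (n - i) * tensorCoord x i.castSucc i.castSucc.rev) := by
  have h := congrFun (congrFun (congrArg tensorCoord hE) i.castSucc) i.rev.castSucc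
  rw [tensorCoord_rTensor_Eop_castSucc, tensorCoord_lTensor_EKinv_castSucc, ← Fin.rev_succ,
    ← Fin.rev_castSucc] at h
  have hrev : (i.castSucc.rev : ℕ) = n - i := by simp only [Fin.val_rev, Fin.val_castSucc]; omega
  rwa [hrev, Fin.val_succ, show 2 * ((n - i : ℕ) : ℤ) - n = n - 2 * i by omega] at h

theorem tensorCoord_rev_eq (hq : q ≠ 0) (hqint : ∀ m : ℕ, 1 ≤ m → m ≤ n → qint q m ≠ 0)
    (hE : (Eop q n).rTensor _ x = (-(Eop q n ∘ₗ Kinvop q n)).lTensor _ x) (m : Fin (n + 1)) :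
    tensorCoord x m m.rev = tensorCoord x 0 (Fin.last n) * yCoeff q n m := by
  induction m using Fin.induction with
  | zero => rw [Fin.rev_zero, Fin.val_zero, yCoeff_zero, mul_one]
  | succ i ih =>
    apply mul_left_cancel₀ (hqint (i + 1) (by omega) i.isLt)
    rw [qint_mul_tensorCoord_succ_rev hE, ih, Fin.val_succ, Fin.val_castSucc]
    linear_combination -tensorCoord x 0 (Fin.last n) * qint_succ_mul_yCoeff_succ q hq i.isLt

theorem exists_eq_smul_yElt (hq : q ≠ 0) (hqint : ∀ m : ℕ, 1 ≤ m → m ≤ n → qint q m ≠ 0)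
    (hroot : ∀ m : ℕ, 1 ≤ m → m ≤ n → q ^ (2 * m) ≠ 1)
    (hE : (Eop q n).rTensor _ x = (-(Eop q n ∘ₗ Kinvop q n)).lTensor _ x)
    (hK : (Kop q n).rTensor _ x = (Kinvop q n).lTensor _ x) :
    ∃ t : k, x = t • yElt q n := by
  refine ⟨tensorCoord x 0 (Fin.last n), tensorCoord.injective (Matrix.ext fun a b => ?_)⟩
  rw [map_smul, Matrix.smul_apply, tensorCoord_yElt, smul_eq_mul]
  split_ifs with h
  · rw [h, tensorCoord_rev_eq hq hqint hE]
  · rw [mul_zero, tensorCoord_eq_zero_of_ne_rev hq hroot hK h]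

end Uniqueness

/-- If the balanced `q`-integers `[1]_q, …, [n]_q` are nonzero and `q^{2m} ≠ 1`
for `1 ≤ m ≤ n`, then the subspace
`Y = {x ∈ V_n* ⊗ V_n* : ρ₁(E)x = ρ₂(S⁻¹E)x, ρ₁(F)x = ρ₂(S⁻¹F)x, ρ₁(K)x = ρ₂(S⁻¹K)x}`
is exactly one-dimensional, spanned by
`y = Σᵢ (−1)^i q^{i(n−i+1)} [n choose i]_q eᵢ ⊗ e_{n−i}`. -/
theorem stmt15 {k : Type} [Field k] (q : k) (hq : q ≠ 0) (n : ℕ)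
    (hqint : ∀ m : ℕ, 1 ≤ m → m ≤ n → qint q m ≠ 0)
    (hroot : ∀ m : ℕ, 1 ≤ m → m ≤ n → q ^ (2 * m) ≠ 1) :
    yElt q n ≠ 0 ∧
      ∀ x : (Fin (n + 1) → k) ⊗[k] (Fin (n + 1) → k),
        (LinearMap.rTensor (Fin (n + 1) → k) (Eop q n) x =
            LinearMap.lTensor (Fin (n + 1) → k) (-(Eop q n ∘ₗ Kinvop q n)) x ∧
          LinearMap.rTensor (Fin (n + 1) → k) (Fop q n) x =
            LinearMap.lTensor (Fin (n + 1) → k) (-(Kop q n ∘ₗ Fop q n)) x ∧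
          LinearMap.rTensor (Fin (n + 1) → k) (Kop q n) x =
            LinearMap.lTensor (Fin (n + 1) → k) (Kinvop q n) x) ↔
        ∃ t : k, x = t • yElt q n := by
  refine ⟨yElt_ne_zero q n, fun x => ⟨?_, ?_⟩⟩
  · rintro ⟨hE, -, hK⟩
    exact exists_eq_smul_yElt hq hqint hroot hE hK
  · rintro ⟨t, rfl⟩
    simp only [map_smul, rTensor_Eop_yElt q n hq, rTensor_Fop_yElt q n hq, rTensor_Kop_yElt,
      and_self]
end

section
/- In the ℚ(v)-algebra generated by X_{ij} (1 ≤ i,j ≤ 2) with relations X₁₁X₂₁ = v X₂₁X₁₁, X₁₁X₁₂ = v X₁₂X₁₁, X₂₁X₁₂ = X₁₂X₂₁, X₁₁X₂₂ − X₂₂X₁₁ = (v − v⁻¹) X₁₂X₂₁, X₁₂X₂₂ = v X₂₂X₁₂, X₂₁X₂₂ = v X₂₂X₂₁, and X₁₁X₂₂ − v X₁₂X₂₁ = 1, the monomials X₁₁^m X₁₂^k X₂₁^h and X₁₂^k X₂₁^h X₂₂^l (m,k,h,l ∈ ℕ, with m,l not both nonzero per monomial pair) span the algebra. -/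
/-!
Let `M` be the span of the ordered monomials. It contains `1`, so since the four generators
generate the algebra it suffices that left multiplication by each generator maps an ordered
monomial into `M`. The `v`-commutation relations move a generator into its place at the cost of
a power of `v`; the only products that leave both families are `X₁₁ X₂₂` and `X₂₂ X₁₁`, and the
quantum determinant rewrites them as `1 + v X₁₂X₂₁` and `1 + v⁻¹ X₁₂X₂₁`, which removes the
offending factor.
-/

open Submodule

theorem mul_pow_eq_smul_pow_mul {K B : Type*} [CommSemiring K] [Semiring B] [Algebra K B]
    {c : K} {x y : B} (hxy : x * y = c • (y * x)) (n : ℕ) :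
    x * y ^ n = c ^ n • (y ^ n * x) := by
  induction n with
  | zero => simp
  | succ n ih =>
    rw [pow_succ', ← mul_assoc, hxy, smul_mul_assoc, mul_assoc, ih, mul_smul_comm, smul_smul,
      ← mul_assoc, ← pow_succ', ← pow_succ']

theorem mul_pow_mul_eq_smul {K B : Type*} [CommSemiring K] [Semiring B] [Algebra K B]
    {c : K} {x y : B} (hxy : x * y = c • (y * x)) (n : ℕ) (z : B) :
    x * (y ^ n * z) = c ^ n • (y ^ n * (x * z)) := by
  rw [← mul_assoc, mul_pow_eq_smul_pow_mul hxy, smul_mul_assoc, mul_assoc]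

theorem Submodule.span_eq_top_of_mul_mem_span {K A : Type*} [CommSemiring K] [Semiring A]
    [Algebra K A] {s T : Set A} (hs : Algebra.adjoin K s = ⊤) (h1 : 1 ∈ span K T)
    (hmul : ∀ g ∈ s, ∀ t ∈ T, g * t ∈ span K T) : span K T = ⊤ := by
  have hideal : ∀ x ∈ Algebra.adjoin K s, ∀ y ∈ span K T, x * y ∈ span K T := by
    intro x hx
    induction hx using Algebra.adjoin_induction with
    | mem g hg =>
      exact fun y hy ↦ (span_le (p := (span K T).comap (LinearMap.mulLeft K g))).mpr
        (hmul g hg) hy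
    | algebraMap r =>
      intro y hy
      rw [Algebra.algebraMap_eq_smul_one, smul_one_mul]
      exact smul_mem _ r hy
    | add x x' _ _ hx hx' => intro y hy; rw [add_mul]; exact add_mem (hx y hy) (hx' y hy)
    | mul x x' _ _ hx hx' => intro y hy; rw [mul_assoc]; exact hx _ (hx' y hy)
  refine eq_top_iff.mpr fun x _ ↦ ?_
  simpa using hideal x (hs ▸ Algebra.mem_top) 1 h1

/-- `a, b, c, d` play the roles of `X₁₁, X₁₂, X₂₁, X₂₂`. -/
structure IsQuantumSL2 {K A : Type*} [Field K] [Ring A] [Algebra K A] (v : K) (a b c d : A) :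
    Prop where
  a_mul_b : a * b = v • (b * a)
  a_mul_c : a * c = v • (c * a)
  c_mul_b : c * b = b * c
  commutator_ad : a * d - d * a = (v - v⁻¹) • (b * c)
  b_mul_d : b * d = v • (d * b)
  c_mul_d : c * d = v • (d * c)
  qdet : a * d - v • (b * c) = 1

def orderedMonomials {A : Type*} [Monoid A] (a b c d : A) : Set A :=
  {x | (∃ m k h : ℕ, x = a ^ m * b ^ k * c ^ h) ∨ (∃ k h l : ℕ, x = b ^ k * c ^ h * d ^ l)}

namespace IsQuantumSL2

variable {K A : Type*} [Field K] [Ring A] [Algebra K A] {v : K} {a b c d : A}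

theorem abc_mem_span (m k h : ℕ) : a ^ m * (b ^ k * c ^ h) ∈ span K (orderedMonomials a b c d) :=
  mul_assoc (a ^ m) _ _ ▸ subset_span (Or.inl ⟨m, k, h, rfl⟩)

theorem bcd_mem_span (k h l : ℕ) : b ^ k * (c ^ h * d ^ l) ∈ span K (orderedMonomials a b c d) :=
  mul_assoc (b ^ k) _ _ ▸ subset_span (Or.inr ⟨k, h, l, rfl⟩)

theorem a_mul_d (hq : IsQuantumSL2 v a b c d) : a * d = 1 + v • (b * c) :=
  sub_eq_iff_eq_add.mp hq.qdet

theorem d_mul_a (hq : IsQuantumSL2 v a b c d) : d * a = 1 + v⁻¹ • (b * c) := by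
  have := hq.commutator_ad
  rw [hq.a_mul_d, sub_smul] at this
  linear_combination (norm := module) -this

theorem b_mul_a (hq : IsQuantumSL2 v a b c d) (hv : v ≠ 0) : b * a = v⁻¹ • (a * b) := by
  rw [hq.a_mul_b, inv_smul_smul₀ hv]

theorem c_mul_a (hq : IsQuantumSL2 v a b c d) (hv : v ≠ 0) : c * a = v⁻¹ • (a * c) := by
  rw [hq.a_mul_c, inv_smul_smul₀ hv]

theorem d_mul_b (hq : IsQuantumSL2 v a b c d) (hv : v ≠ 0) : d * b = v⁻¹ • (b * d) := by
  rw [hq.b_mul_d, inv_smul_smul₀ hv]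

theorem d_mul_c (hq : IsQuantumSL2 v a b c d) (hv : v ≠ 0) : d * c = v⁻¹ • (c * d) := by
  rw [hq.c_mul_d, inv_smul_smul₀ hv]

theorem bc_mul_a (hq : IsQuantumSL2 v a b c d) (hv : v ≠ 0) :
    b * c * a = (v⁻¹ * v⁻¹) • (a * (b * c)) := by
  rw [mul_assoc, hq.c_mul_a hv, mul_smul_comm, ← mul_assoc, hq.b_mul_a hv, smul_mul_assoc,
    smul_smul, mul_assoc]

theorem commute_cb (hq : IsQuantumSL2 v a b c d) : Commute c b := hq.c_mul_b

theorem a_mul_mem_span (hq : IsQuantumSL2 v a b c d) :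
    ∀ t ∈ orderedMonomials a b c d, a * t ∈ span K (orderedMonomials a b c d) := by
  rintro _ (⟨m, k, h, rfl⟩ | ⟨k, h, _ | l, rfl⟩)
  · simpa only [mul_assoc, pow_succ'] using abc_mem_span (m + 1) k h
  · simpa using abc_mem_span (d := d) 1 k h
  · have : a * (b ^ k * c ^ h * d ^ (l + 1)) = (v ^ k * v ^ h) • (b ^ k * (c ^ h * d ^ l)) +
        (v ^ k * v ^ h * v) • (b ^ (k + 1) * (c ^ (h + 1) * d ^ l)) := by
      rw [mul_assoc, mul_pow_mul_eq_smul hq.a_mul_b, mul_pow_mul_eq_smul hq.a_mul_c,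
        pow_succ' d, ← mul_assoc a, hq.a_mul_d, add_mul, one_mul, smul_mul_assoc, mul_assoc b]
      simp only [pow_succ, mul_add, mul_smul_comm, smul_add, smul_smul, mul_assoc,
        (hq.commute_cb.pow_left h).left_comm]
    rw [this]
    exact add_mem (smul_mem _ _ (bcd_mem_span k h l)) (smul_mem _ _ (bcd_mem_span _ _ l))

theorem b_mul_mem_span (hq : IsQuantumSL2 v a b c d) (hv : v ≠ 0) :
    ∀ t ∈ orderedMonomials a b c d, b * t ∈ span K (orderedMonomials a b c d) := by
  rintro _ (⟨m, k, h, rfl⟩ | ⟨k, h, l, rfl⟩)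
  · have : b * (a ^ m * b ^ k * c ^ h) = v⁻¹ ^ m • (a ^ m * (b ^ (k + 1) * c ^ h)) := by
      rw [mul_assoc, mul_pow_mul_eq_smul (hq.b_mul_a hv), ← mul_assoc b, ← pow_succ']
    exact this ▸ smul_mem _ _ (abc_mem_span m (k + 1) h)
  · simpa only [mul_assoc, pow_succ'] using bcd_mem_span (a := a) (k + 1) h l

theorem c_mul_mem_span (hq : IsQuantumSL2 v a b c d) (hv : v ≠ 0) :
    ∀ t ∈ orderedMonomials a b c d, c * t ∈ span K (orderedMonomials a b c d) := by
  rintro _ (⟨m, k, h, rfl⟩ | ⟨k, h, l, rfl⟩)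
  · have : c * (a ^ m * b ^ k * c ^ h) = v⁻¹ ^ m • (a ^ m * (b ^ k * c ^ (h + 1))) := by
      rw [mul_assoc, mul_pow_mul_eq_smul (hq.c_mul_a hv), (hq.commute_cb.pow_right k).left_comm,
        ← pow_succ']
    exact this ▸ smul_mem _ _ (abc_mem_span m k (h + 1))
  · have : c * (b ^ k * c ^ h * d ^ l) = b ^ k * (c ^ (h + 1) * d ^ l) := by
      rw [mul_assoc, (hq.commute_cb.pow_right k).left_comm, ← mul_assoc c, ← pow_succ']
    exact this ▸ bcd_mem_span k (h + 1) l

theorem d_mul_mem_span (hq : IsQuantumSL2 v a b c d) (hv : v ≠ 0) :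
    ∀ t ∈ orderedMonomials a b c d, d * t ∈ span K (orderedMonomials a b c d) := by
  rintro _ (⟨_ | m, k, h, rfl⟩ | ⟨k, h, l, rfl⟩)
  · have : d * (a ^ 0 * b ^ k * c ^ h) = (v⁻¹ ^ k * v⁻¹ ^ h) • (b ^ k * (c ^ h * d ^ 1)) := by
      rw [pow_zero, one_mul, mul_pow_mul_eq_smul (hq.d_mul_b hv),
        mul_pow_eq_smul_pow_mul (hq.d_mul_c hv)]
      simp only [mul_smul_comm, smul_smul, pow_one]
    exact this ▸ smul_mem _ _ (bcd_mem_span k h 1)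
  · have : d * (a ^ (m + 1) * b ^ k * c ^ h) = a ^ m * (b ^ k * c ^ h) +
        (v⁻¹ * (v⁻¹ * v⁻¹) ^ m) • (a ^ m * (b ^ (k + 1) * c ^ (h + 1))) := by
      rw [mul_assoc, pow_succ', mul_assoc a, ← mul_assoc d, hq.d_mul_a, add_mul, one_mul,
        smul_mul_assoc, mul_pow_mul_eq_smul (hq.bc_mul_a hv)]
      simp only [pow_succ', smul_smul, mul_assoc, (hq.commute_cb.pow_right k).left_comm]
    exact this ▸ add_mem (abc_mem_span m k h) (smul_mem _ _ (abc_mem_span m (k + 1) (h + 1)))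
  · have : d * (b ^ k * c ^ h * d ^ l) =
        (v⁻¹ ^ k * v⁻¹ ^ h) • (b ^ k * (c ^ h * d ^ (l + 1))) := by
      rw [mul_assoc, mul_pow_mul_eq_smul (hq.d_mul_b hv), mul_pow_mul_eq_smul (hq.d_mul_c hv),
        ← pow_succ' d]
      simp only [mul_smul_comm, smul_smul]
    exact this ▸ smul_mem _ _ (bcd_mem_span k h (l + 1))

theorem span_orderedMonomials_eq_top (hq : IsQuantumSL2 v a b c d) (hv : v ≠ 0)
    (hgen : Algebra.adjoin K {a, b, c, d} = ⊤) : span K (orderedMonomials a b c d) = ⊤ := by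
  refine span_eq_top_of_mul_mem_span hgen ?_ ?_
  · simpa using abc_mem_span (K := K) (d := d) 0 0 0
  · rintro g (rfl | rfl | rfl | rfl)
    exacts [hq.a_mul_mem_span, hq.b_mul_mem_span hv, hq.c_mul_mem_span hv, hq.d_mul_mem_span hv]

end IsQuantumSL2

/-- In the `ℚ(v)`-algebra generated by `X₁₁, X₁₂, X₂₁, X₂₂` subject to the
quantum `SL₂` relations, the ordered monomials `X₁₁^m X₁₂^k X₂₁^h` and
`X₁₂^k X₂₁^h X₂₂^l` (in which at least one of the exponents of `X₁₁` and `X₂₂`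
vanishes) span the algebra. -/
theorem stmt16 {A : Type} [Ring A] [Algebra (RatFunc ℚ) A]
    (X11 X12 X21 X22 : A)
    (hgen : Algebra.adjoin (RatFunc ℚ) {X11, X12, X21, X22} = ⊤)
    (r1 : X11 * X21 = (RatFunc.X : RatFunc ℚ) • (X21 * X11))
    (r2 : X11 * X12 = (RatFunc.X : RatFunc ℚ) • (X12 * X11))
    (r3 : X21 * X12 = X12 * X21)
    (r4 : X11 * X22 - X22 * X11 =
      ((RatFunc.X : RatFunc ℚ) - (RatFunc.X : RatFunc ℚ)⁻¹) • (X12 * X21))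
    (r5 : X12 * X22 = (RatFunc.X : RatFunc ℚ) • (X22 * X12))
    (r6 : X21 * X22 = (RatFunc.X : RatFunc ℚ) • (X22 * X21))
    (r7 : X11 * X22 - (RatFunc.X : RatFunc ℚ) • (X12 * X21) = 1) :
    Submodule.span (RatFunc ℚ)
        {x : A | (∃ m k h : ℕ, x = X11 ^ m * X12 ^ k * X21 ^ h) ∨
          (∃ k h l : ℕ, x = X12 ^ k * X21 ^ h * X22 ^ l)} = ⊤ :=
  IsQuantumSL2.span_orderedMonomials_eq_top ⟨r2, r1, r3, r4, r5, r6, r7⟩ RatFunc.X_ne_zero hgen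
end
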